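/- Let X be a real Banach space and let (S(t))_{t ≥ 0} be a continuous semigroup of contractions on X which moreover satisfies ‖S(t)‖_{op} ≤ c e^{−t/2} for some constant c > 0 and all t ≥ 0. Let g : [0, ∞) → X be continuous with range contained in a compact subset K of X. Then the family {V(t) : t ≥ 0}, where V(t) := ∫₀ᵗ S(s) g(t−s) ds (Bochner integral), is totally bounded in X. -/

import Mathlib

/-!
Truncate the convolution at a time `T`. By the decay of `S`, the tail `∫ s in T..t` is at most
`2 c M e^{-T/2}`, where `M` bounds `K`. The truncated integral `∫ s in 0..min t T` is `min t T`
times an average of values of the jointly continuous map `(s, x) ↦ S s x` on the compact set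
`[0, T] × K`, so it lies in `T • closure (convexHull ({0} ∪ S([0, T] × K)))`, a totally bounded
set independent of `t`.
-/

open MeasureTheory Set Filter Topology Pointwise

theorem continuousOn_clm_apply_of_norm_le {𝕜 α E F : Type*} [NontriviallyNormedField 𝕜]
    [TopologicalSpace α] [SeminormedAddCommGroup E] [NormedSpace 𝕜 E]
    [SeminormedAddCommGroup F] [NormedSpace 𝕜 F]
    {S : α → E →L[𝕜] F} {s : Set α} {C : ℝ} (hS_bound : ∀ t ∈ s, ‖S t‖ ≤ C)
    (hS_cont : ∀ x, ContinuousOn (fun t => S t x) s) :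
    ContinuousOn (fun p : α × E => S p.1 p.2) (s ×ˢ univ) := by
  rintro ⟨t₀, x₀⟩ ⟨ht₀, -⟩
  have h_fixed : ContinuousWithinAt (fun p : α × E => S p.1 x₀) (s ×ˢ univ) (t₀, x₀) :=
    (hS_cont x₀ t₀ ht₀).comp (g := fun t => S t x₀) continuousWithinAt_fst fun _ hp => hp.1
  -- `S t x = S t (x - x₀) + S t x₀`, and the first term is at most `C * ‖x - x₀‖`.
  have h_small : Tendsto (fun p : α × E => S p.1 (p.2 - x₀)) (𝓝[s ×ˢ univ] (t₀, x₀)) (𝓝 0) := by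
    have h_dist : Tendsto (fun p : α × E => C * ‖p.2 - x₀‖) (𝓝[s ×ˢ univ] (t₀, x₀)) (𝓝 0) := by
      have : Continuous fun p : α × E => C * ‖p.2 - x₀‖ := by fun_prop
      simpa using (this.tendsto (t₀, x₀)).mono_left nhdsWithin_le_nhds
    refine squeeze_zero_norm' ?_ h_dist
    filter_upwards [self_mem_nhdsWithin] with p hp
    exact (S p.1).le_of_opNorm_le (hS_bound _ hp.1) _
  simpa [ContinuousWithinAt] using h_small.add h_fixed

theorem norm_intervalIntegral_le_of_norm_le_mul_exp {E : Type*} [NormedAddCommGroup E]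
    [NormedSpace ℝ E] {f : ℝ → E} {C a T t : ℝ} (ha : 0 < a) (hC : 0 ≤ C) (hTt : T ≤ t)
    (hf : ∀ s ∈ Ioc T t, ‖f s‖ ≤ C * Real.exp (-s / a)) :
    ‖∫ s in T..t, f s‖ ≤ a * C * Real.exp (-T / a) := by
  have h_deriv : ∀ s ∈ uIcc T t,
      HasDerivAt (fun s => -(a * C) * Real.exp (-s / a)) (C * Real.exp (-s / a)) s := by
    intro s _
    refine (((hasDerivAt_neg s).div_const a).exp.const_mul (-(a * C))).congr_deriv ?_
    field_simp
  have h_cont : Continuous fun s => C * Real.exp (-s / a) := by fun_prop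
  calc ‖∫ s in T..t, f s‖ ≤ ∫ s in T..t, C * Real.exp (-s / a) :=
        intervalIntegral.norm_integral_le_of_norm_le hTt (ae_of_all _ hf)
          (h_cont.intervalIntegrable _ _)
    _ = a * C * (Real.exp (-T / a) - Real.exp (-t / a)) := by
        rw [intervalIntegral.integral_eq_sub_of_hasDerivAt h_deriv (h_cont.intervalIntegrable _ _)]
        ring
    _ ≤ a * C * Real.exp (-T / a) := by
        have := Real.exp_pos (-t / a)
        have := mul_nonneg ha.le hC
        nlinarith

theorem intervalIntegral_mem_smul_closure_convexHull_insert_zero {E : Type*}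
    [NormedAddCommGroup E] [NormedSpace ℝ E] [CompleteSpace E] {f : ℝ → E} {D : Set E} {τ T : ℝ}
    (hτ : 0 ≤ τ) (hτT : τ ≤ T) (hf : IntegrableOn f (Ioc 0 τ))
    (hfD : ∀ s ∈ Ioc 0 τ, f s ∈ D) :
    ∫ s in 0..τ, f s ∈ T • closure (convexHull ℝ (insert 0 D)) := by
  set A := closure (convexHull ℝ (insert 0 D))
  have hA : Convex ℝ A := (convex_convexHull ℝ _).closure
  have hA0 : (0 : E) ∈ A := subset_closure (subset_convexHull ℝ _ (mem_insert 0 D))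
  rcases hτ.eq_or_lt with rfl | hτ
  · simpa using smul_mem_smul_set (a := T) hA0
  have hT : 0 < T := hτ.trans_le hτT
  have h_avg : ⨍ s in Ioc 0 τ, f s ∈ A := by
    refine hA.set_average_mem isClosed_closure (by simp [hτ]) measure_Ioc_lt_top.ne ?_ hf
    refine (ae_restrict_iff' measurableSet_Ioc).2 (ae_of_all _ fun s hs => ?_)
    exact subset_closure (subset_convexHull ℝ _ (mem_insert_of_mem 0 (hfD s hs)))
  refine ⟨(τ / T) • ⨍ s in Ioc 0 τ, f s, hA.smul_mem_of_zero_mem hA0 h_avg ⟨by positivity, ?_⟩, ?_⟩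
  · exact div_le_one_of_le₀ hτT hT.le
  · show T • _ = _
    rw [setAverage_eq, Real.volume_real_Ioc_of_le hτ.le, intervalIntegral.integral_of_le hτ.le,
      smul_smul, smul_smul, sub_zero, show T * (τ / T) * τ⁻¹ = 1 by field_simp, one_smul]

theorem Metric.totallyBounded_of_forall_exists_dist_lt {α : Type*} [PseudoMetricSpace α]
    {s : Set α} (h : ∀ ε > 0, ∃ t, TotallyBounded t ∧ ∀ x ∈ s, ∃ y ∈ t, dist x y < ε) :
    TotallyBounded s := by
  refine Metric.totallyBounded_iff.2 fun ε hε => ?_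
  obtain ⟨t, ht, hst⟩ := h (ε / 2) (half_pos hε)
  obtain ⟨N, hN, htN⟩ := Metric.totallyBounded_iff.1 ht (ε / 2) (half_pos hε)
  refine ⟨N, hN, fun x hx => ?_⟩
  obtain ⟨y, hy, hxy⟩ := hst x hx
  obtain ⟨z, hz, hyz⟩ := mem_iUnion₂.1 (htN hy)
  exact mem_iUnion₂.2 ⟨z, hz, by rw [Metric.mem_ball] at hyz ⊢; linarith [dist_triangle x y z]⟩

section Convolution

variable {X : Type*} [NormedAddCommGroup X] [NormedSpace ℝ X] {S : ℝ → X →L[ℝ] X} {g : ℝ → X}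

theorem continuousOn_convolution_integrand
    (hS : ContinuousOn (fun p : ℝ × X => S p.1 p.2) (Ici 0 ×ˢ univ)) (hg : ContinuousOn g (Ici 0))
    (t : ℝ) : ContinuousOn (fun s => S s (g (t - s))) (Icc 0 t) :=
  hS.comp (continuousOn_id.prodMk (hg.comp (by fun_prop) fun s hs => sub_nonneg.2 hs.2))
    fun s hs => ⟨hs.1, mem_univ _⟩

theorem norm_convolution_sub_truncated_le
    (hS : ContinuousOn (fun p : ℝ × X => S p.1 p.2) (Ici 0 ×ˢ univ)) (hg : ContinuousOn g (Ici 0))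
    {c M : ℝ} (hc : 0 ≤ c) (hM : 0 ≤ M) (hS_decay : ∀ t ≥ (0:ℝ), ‖S t‖ ≤ c * Real.exp (-t / 2))
    (hgM : ∀ t ≥ (0:ℝ), ‖g t‖ ≤ M) {t T : ℝ} (hT : 0 ≤ T) (hTt : T ≤ t) :
    ‖(∫ s in 0..t, S s (g (t - s))) - ∫ s in 0..T, S s (g (t - s))‖ ≤
      2 * (c * M) * Real.exp (-T / 2) := by
  have h_integrable : ∀ u ∈ Icc 0 t, IntervalIntegrable (fun s => S s (g (t - s))) volume 0 u :=
    fun u hu => ((continuousOn_convolution_integrand hS hg t).mono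
      (Icc_subset_Icc le_rfl hu.2)).intervalIntegrable_of_Icc hu.1
  rw [intervalIntegral.integral_interval_sub_left (h_integrable t ⟨hT.trans hTt, le_rfl⟩)
    (h_integrable T ⟨hT, hTt⟩)]
  refine norm_intervalIntegral_le_of_norm_le_mul_exp two_pos (by positivity) hTt fun s hs => ?_
  calc ‖S s (g (t - s))‖ ≤ c * Real.exp (-s / 2) * ‖g (t - s)‖ :=
        (S s).le_of_opNorm_le (hS_decay s (hT.trans hs.1.le)) _
    _ ≤ c * Real.exp (-s / 2) * M := by gcongr; exact hgM _ (sub_nonneg.2 hs.2)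
    _ = c * M * Real.exp (-s / 2) := by ring

variable [CompleteSpace X]

theorem convolution_truncated_mem
    (hS : ContinuousOn (fun p : ℝ × X => S p.1 p.2) (Ici 0 ×ˢ univ)) (hg : ContinuousOn g (Ici 0))
    {K : Set X} (hgK : ∀ t ≥ (0:ℝ), g t ∈ K) {t T : ℝ} (ht : 0 ≤ t) (hT : 0 ≤ T) :
    ∫ s in 0..min t T, S s (g (t - s)) ∈
      T • closure (convexHull ℝ (insert 0 ((fun p : ℝ × X => S p.1 p.2) '' (Icc 0 T ×ˢ K)))) := by
  refine intervalIntegral_mem_smul_closure_convexHull_insert_zero (le_min ht hT)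
    (min_le_right _ _) ?_ fun s hs => ⟨(s, g (t - s)), ⟨⟨hs.1.le, hs.2.trans (min_le_right _ _)⟩,
      hgK _ (by linarith [hs.2, min_le_left t T])⟩, rfl⟩
  exact ((continuousOn_convolution_integrand hS hg t).mono
    (Icc_subset_Icc le_rfl (min_le_left _ _))).integrableOn_Icc.mono_set Ioc_subset_Icc_self

end Convolution

theorem totallyBounded_convolution_family
    {X : Type*} [NormedAddCommGroup X] [NormedSpace ℝ X] [CompleteSpace X]
    (S : ℝ → X →L[ℝ] X)
    (hS_contr : ∀ t ≥ (0:ℝ), ‖S t‖ ≤ 1)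
    (hS_cont : ∀ x : X, ContinuousOn (fun t => S t x) (Set.Ici (0:ℝ)))
    (c : ℝ)
    (hS_decay : ∀ t ≥ (0:ℝ), ‖S t‖ ≤ c * Real.exp (-t / 2))
    (g : ℝ → X) (hg_cont : ContinuousOn g (Set.Ici 0))
    (K : Set X) (hK : IsCompact K) (hgK : ∀ t ≥ (0:ℝ), g t ∈ K) :
    TotallyBounded ((fun t => ∫ s in (0:ℝ)..t, S s (g (t - s))) '' Set.Ici 0) := by
  obtain ⟨M, hM, hKM⟩ := hK.isBounded.exists_pos_norm_le
  have hc : 0 ≤ c := by simpa using (norm_nonneg _).trans (hS_decay 0 le_rfl)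
  have hS_joint := continuousOn_clm_apply_of_norm_le hS_contr hS_cont
  refine Metric.totallyBounded_of_forall_exists_dist_lt fun ε hε => ?_
  obtain ⟨T, hT, hTε⟩ : ∃ T ≥ (0:ℝ), 2 * (c * M) * Real.exp (-T / 2) < ε := by
    have : Tendsto (fun T : ℝ => 2 * (c * M) * Real.exp (-T / 2)) atTop (𝓝 0) := by
      simpa [Function.comp_def, neg_div] using (Real.tendsto_exp_neg_atTop_nhds_zero.comp
        (tendsto_id.atTop_div_const two_pos)).const_mul (2 * (c * M))
    exact ((eventually_ge_atTop 0).and (this.eventually (gt_mem_nhds hε))).exists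
  have hD : IsCompact ((fun p : ℝ × X => S p.1 p.2) '' (Icc 0 T ×ˢ K)) :=
    (isCompact_Icc.prod hK).image_of_continuousOn (hS_joint.mono fun p hp => ⟨hp.1.1, mem_univ _⟩)
  refine ⟨_, (totallyBounded_convexHull.2 (hD.insert 0).totallyBounded).closure.image
    (uniformContinuous_const_smul T), ?_⟩
  rintro _ ⟨t, ht, rfl⟩
  refine ⟨_, convolution_truncated_mem hS_joint hg_cont hgK ht hT, ?_⟩
  rcases le_total t T with htT | hTt
  · rwa [min_eq_left htT, dist_self]
  · rw [min_eq_right hTt, dist_eq_norm]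
    exact (norm_convolution_sub_truncated_le hS_joint hg_cont hc hM.le hS_decay
      (fun t ht => hKM _ (hgK t ht)) hT hTt).trans_lt hTε
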